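/- arXiv:math/0106074 — 2 statements merged into one kernel-verified Lean document; each statement's English description precedes it below -/
import Mathlib

section
/- For any real t > 0, integers k ≥ 0 and l ≥ 1, the integral from 0 to 1 of (1-v)^{t-1}·v^l·exp(t·y(v))·(-ln(1-v) - y(v))^k dv equals k!/t^{k+1}, where y(v) = v + v²/2 + ··· + v^l/l. -/
open MeasureTheory Set Filter

/-- `y l v = v + v²/2 + ⋯ + v^l/l`. -/
noncomputable def y (l : ℕ) (v : ℝ) : ℝ := ∑ i ∈ Finset.range l, v ^ (i + 1) / (i + 1)

lemma y_hasDerivAt (l : ℕ) (v : ℝ) :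
    HasDerivAt (y l) (∑ i ∈ Finset.range l, v ^ i) v := by
  have : HasDerivAt (fun w : ℝ => ∑ i ∈ Finset.range l, w ^ (i + 1) / ((i : ℝ) + 1))
      (∑ i ∈ Finset.range l, v ^ i) v := by
    apply HasDerivAt.fun_sum
    intro i _
    have h := (hasDerivAt_pow (i + 1) v).div_const (i + 1)
    have h2 : (↑(i + 1) * v ^ (i + 1 - 1)) / ((i : ℝ) + 1) = v ^ i := by
      push_cast
      field_simp
    rw [h2] at h
    exact h
  exact this

lemma g_hasDerivAt (l : ℕ) {v : ℝ} (hv : v < 1) :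
    HasDerivAt (fun w => -Real.log (1 - w) - y l w) (v ^ l / (1 - v)) v := by
  have h1v : (0:ℝ) < 1 - v := by linarith
  have hlog : HasDerivAt (fun w : ℝ => Real.log (1 - w)) ((-1) / (1 - v)) v := by
    have h := ((hasDerivAt_const v (1:ℝ)).sub (hasDerivAt_id v))
    simpa using h.log (ne_of_gt h1v)
  have h := (hlog.neg.sub (y_hasDerivAt l v))
  have hsum : ∑ i ∈ Finset.range l, v ^ i = (v ^ l - 1) / (v - 1) := geom_sum_eq (by linarith) l
  rw [hsum] at h
  have : -((-1) / (1 - v)) - (v ^ l - 1) / (v - 1) = v ^ l / (1 - v) := by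
    have h2 : v - 1 ≠ 0 := by intro h; apply ne_of_gt h1v; linarith
    have h3 : (1:ℝ) - v ≠ 0 := ne_of_gt h1v
    field_simp
    ring
  rwa [this] at h

theorem stmt3 (t : ℝ) (ht : 0 < t) (k l : ℕ) (hl : 1 ≤ l) :
    ∫ v in (0:ℝ)..1, (1 - v) ^ (t - 1) * v ^ l * Real.exp (t * y l v) *
        (-Real.log (1 - v) - y l v) ^ k
      = (Nat.factorial k : ℝ) / t ^ (k + 1) := by
  set g : ℝ → ℝ := fun w => -Real.log (1 - w) - y l w with hg
  have hg0 : g 0 = 0 := by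
    simp [hg, y]
  -- continuity on Ico 0 1
  have hcont : ContinuousOn g (Set.Ico 0 1) := fun v hv =>
    (g_hasDerivAt l hv.2).continuousAt.continuousWithinAt
  -- strict monotonicity on Ico 0 1
  have hmono : StrictMonoOn g (Set.Ico 0 1) := by
    apply strictMonoOn_of_deriv_pos (convex_Ico 0 1) hcont
    intro x hx
    rw [interior_Ico] at hx
    rw [(g_hasDerivAt l hx.2).deriv]
    have h1x : (0:ℝ) < 1 - x := by linarith [hx.2]
    exact div_pos (pow_pos hx.1 l) h1x
  have hinj : Set.InjOn g (Set.Ioo 0 1) := (hmono.mono Set.Ioo_subset_Ico_self).injOn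
  -- image of Ioo 0 1 under g is Ioi 0
  have himage : g '' Set.Ioo 0 1 = Set.Ioi 0 := by
    apply Set.Subset.antisymm
    · rintro _ ⟨v, hv, rfl⟩
      have := hmono (Set.left_mem_Ico.2 one_pos) (Set.Ioo_subset_Ico_self hv) hv.1
      rw [hg0] at this
      exact this
    · intro u hu
      -- g tends to atTop at 1⁻
      have htend : Tendsto g (nhdsWithin 1 (Set.Iio 1)) atTop := by
        have h1 : Tendsto (fun w : ℝ => 1 - w) (nhdsWithin 1 (Set.Iio 1))
            (nhdsWithin 0 (Set.Ioi 0)) := by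
          apply tendsto_nhdsWithin_of_tendsto_nhds_of_eventually_within
          · have hc : Continuous fun w : ℝ => 1 - w := by continuity
            have := hc.tendsto 1
            simp only [sub_self] at this
            exact this.mono_left nhdsWithin_le_nhds
          · filter_upwards [self_mem_nhdsWithin] with w hw
            simp only [Set.mem_Iio] at hw
            simp only [Set.mem_Ioi]
            linarith
        have hlog : Tendsto (fun w : ℝ => -Real.log (1 - w)) (nhdsWithin 1 (Set.Iio 1)) atTop := by
          exact tendsto_neg_atBot_atTop.comp (Real.tendsto_log_nhdsGT_zero.comp h1)
        have hy : Tendsto (fun w : ℝ => -(y l w)) (nhdsWithin 1 (Set.Iio 1)) (nhds (-(y l 1))) := by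
          have : Continuous (y l) := by
            unfold y
            exact continuous_finset_sum _ fun i _ => (continuous_pow _).div_const _
          exact ((this.tendsto 1).mono_left nhdsWithin_le_nhds).neg
        have := hlog.atTop_add hy
        simpa [hg, sub_eq_add_neg] using this
      have hev : ∀ᶠ w in nhdsWithin 1 (Set.Iio 1), u < g w ∧ w ∈ Set.Ioo 0 1 := by
        filter_upwards [htend.eventually (eventually_gt_atTop u),
          Ioo_mem_nhdsLT_of_mem (by constructor <;> norm_num : (1:ℝ) ∈ Set.Ioc 0 1)] with w h1 h2
        exact ⟨h1, h2⟩
      obtain ⟨b, hub, hb⟩ := hev.exists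
      have hsub : Set.Ioo (g 0) (g b) ⊆ g '' Set.Ioo 0 b :=
        intermediate_value_Ioo hb.1.le (hcont.mono (fun w hw =>
          ⟨hw.1, lt_of_le_of_lt hw.2 hb.2⟩))
      have : u ∈ Set.Ioo (g 0) (g b) := by rw [hg0]; exact ⟨hu, hub⟩
      obtain ⟨v, hv, hvu⟩ := hsub this
      exact ⟨v, ⟨hv.1, hv.2.trans hb.2⟩, hvu⟩
  -- substitution
  have hderiv : ∀ v ∈ Set.Ioo (0:ℝ) 1,
      HasDerivWithinAt g (v ^ l / (1 - v)) (Set.Ioo 0 1) v :=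
    fun v hv => (g_hasDerivAt l hv.2).hasDerivWithinAt
  have hsubst := integral_image_eq_integral_abs_deriv_smul measurableSet_Ioo hderiv hinj
    (fun u => u ^ k * Real.exp (-(t * u)))
  rw [himage] at hsubst
  -- compute the Gamma integral
  have hgamma : ∫ u in Set.Ioi (0:ℝ), u ^ k * Real.exp (-(t * u))
      = (Nat.factorial k : ℝ) / t ^ (k + 1) := by
    have h := Real.integral_rpow_mul_exp_neg_mul_Ioi
      (a := (k:ℝ) + 1) (by positivity) ht
    have heq : ∀ u ∈ Set.Ioi (0:ℝ),
        u ^ ((k:ℝ) + 1 - 1) * Real.exp (-(t * u)) = u ^ k * Real.exp (-(t * u)) := by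
      intro u _
      rw [add_sub_cancel_right, Real.rpow_natCast]
    rw [setIntegral_congr_fun measurableSet_Ioi heq] at h
    rw [h]
    have h1 : ((k:ℝ) + 1) = ((k + 1 : ℕ) : ℝ) := by push_cast; ring
    rw [h1, Real.rpow_natCast]
    rw [show ((k + 1 : ℕ) : ℝ) = (k : ℝ) + 1 by push_cast; ring, Real.Gamma_nat_eq_factorial]
    rw [one_div, inv_pow, inv_mul_eq_div]
  rw [hgamma] at hsubst
  rw [hsubst]
  -- rewrite interval integral as integral over Ioo and match integrands
  rw [intervalIntegral.integral_of_le zero_le_one, MeasureTheory.integral_Ioc_eq_integral_Ioo]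
  apply setIntegral_congr_fun measurableSet_Ioo
  intro v hv
  have h1v : (0:ℝ) < 1 - v := by linarith [hv.2]
  have hvpos := hv.1
  simp only [smul_eq_mul]
  have habs : |v ^ l / (1 - v)| = v ^ l / (1 - v) := by
    apply abs_of_nonneg; positivity
  rw [habs]
  have hexp : Real.exp (-(t * g v)) = Real.exp (Real.log (1 - v) * t) * Real.exp (t * y l v) := by
    rw [← Real.exp_add]
    congr 1
    simp only [hg]
    ring
  rw [hexp]
  have hrpow : (1 - v) ^ (t - 1) = Real.exp (Real.log (1 - v) * t) / (1 - v) := by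
    rw [Real.rpow_def_of_pos h1v, mul_sub, mul_one, Real.exp_sub, Real.exp_log h1v]
  rw [hrpow]
  simp only [hg]
  ring
end

section
/- For real t > 0 and integers k ≥ 0, l ≥ 1: (1/k!) · ∑_{r₁,…,r_l, s₁,…,s_k ≥ 0} (s₁+⋯+s_k + r₁+2r₂+⋯+l·r_l + kl + k + l)! · t^{k + r₁+⋯+r_l + 1} / [ (s₁+l+1)···(s_k+l+1) · 1^{r₁}·2^{r₂}···l^{r_l} · r₁!···r_l! · (t)_{s₁+⋯+s_k + r₁+2r₂+⋯+l·r_l + kl + k + l + 1} ] = 1. -/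
open MeasureTheory Set Real Filter

noncomputable def poch (x : ℝ) (n : ℕ) : ℝ := ∏ i ∈ Finset.range n, (x + i)

lemma poch_pos {t : ℝ} (ht : 0 < t) (n : ℕ) : 0 < poch t n := by
  apply Finset.prod_pos; intro i _; positivity

lemma gamma_poch {t : ℝ} (ht : 0 < t) (n : ℕ) :
    Real.Gamma (t + n) = Real.Gamma t * poch t n := by
  induction n with
  | zero => simp [poch]
  | succ n ih =>
    have h : t + (n+1 : ℕ) = (t + n) + 1 := by push_cast; ring
    rw [h, Real.Gamma_add_one (by positivity), ih]
    simp only [poch, Finset.prod_range_succ]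
    ring

lemma beta_complex_congr {t : ℝ} (n : ℕ) (x : ℝ) (hx : x ∈ Set.uIcc (0:ℝ) 1) :
    (x:ℂ) ^ ((n+1:ℂ) - 1) * (1 - (x:ℂ)) ^ ((t:ℂ) - 1)
      = ((x ^ n * (1-x) ^ (t-1) : ℝ) : ℂ) := by
  rw [Set.uIcc_of_le (by norm_num)] at hx
  have h1 : (0:ℝ) ≤ x := hx.1
  have h2 : (0:ℝ) ≤ 1 - x := by linarith [hx.2]
  have e1 : ((n+1:ℂ) - 1) = (n : ℂ) := by ring
  rw [e1, Complex.cpow_natCast]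
  have e2 : (1 - (x:ℂ)) = ((1 - x : ℝ) : ℂ) := by push_cast; ring
  have e3 : ((t:ℂ) - 1) = ((t - 1 : ℝ) : ℂ) := by push_cast; ring
  rw [e2, e3, ← Complex.ofReal_cpow h2]
  push_cast
  ring

lemma beta_integrable {t : ℝ} (ht : 0 < t) (n : ℕ) :
    IntegrableOn (fun x : ℝ => x ^ n * (1-x) ^ (t-1)) (Set.Ioo 0 1) := by
  have hc := Complex.betaIntegral_convergent (u := (n+1:ℂ)) (v := (t:ℂ))
    (by simp; positivity) (by simpa using ht)
  rw [intervalIntegrable_iff_integrableOn_Ioc_of_le (by norm_num)] at hc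
  have : IntegrableOn (fun x : ℝ =>
      ((x:ℂ) ^ ((n+1:ℂ) - 1) * (1 - (x:ℂ)) ^ ((t:ℂ) - 1)).re) (Set.Ioo 0 1) := by
    exact (hc.mono_set Set.Ioo_subset_Ioc_self).re
  refine this.congr_fun (fun x hx => ?_) measurableSet_Ioo
  have hmem : x ∈ Set.uIcc (0:ℝ) 1 := by
    rw [Set.uIcc_of_le (by norm_num)]
    exact ⟨hx.1.le, hx.2.le⟩
  dsimp only
  rw [beta_complex_congr (t := t) n x hmem, Complex.ofReal_re]

lemma beta_eq {t : ℝ} (ht : 0 < t) (n : ℕ) :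
    ∫ x in Set.Ioo (0:ℝ) 1, x ^ n * (1-x) ^ (t-1)
      = (Nat.factorial n : ℝ) / poch t (n+1) := by
  have hG := Complex.Gamma_mul_Gamma_eq_betaIntegral (s := (n+1:ℂ)) (t := (t:ℂ))
    (by simp; positivity) (by simpa using ht)
  have hbeta : Complex.betaIntegral (n+1) t
      = ((∫ x in Set.Ioo (0:ℝ) 1, x ^ n * (1-x) ^ (t-1) : ℝ) : ℂ) := by
    rw [Complex.betaIntegral]
    rw [intervalIntegral.integral_congr (fun x hx => beta_complex_congr n x hx)]
    rw [intervalIntegral.integral_ofReal]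
    congr 1
    rw [intervalIntegral.integral_of_le (by norm_num), integral_Ioc_eq_integral_Ioo]
  rw [hbeta] at hG
  have h1 : Complex.Gamma ((n:ℂ)+1) = ((Nat.factorial n : ℝ) : ℂ) := by
    rw [Complex.Gamma_nat_eq_factorial]
    norm_cast
  have h2 : Complex.Gamma ((n:ℂ)+1+t) = ((Real.Gamma t * poch t (n+1) : ℝ) : ℂ) := by
    have : ((n:ℂ)+1+t) = ((t + ((n:ℕ)+1:ℕ) : ℝ) : ℂ) := by push_cast; ring
    rw [this, Complex.Gamma_ofReal, gamma_poch ht]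
  rw [h1, h2, Complex.Gamma_ofReal] at hG
  have hG' : (Nat.factorial n : ℝ) * Real.Gamma t
      = Real.Gamma t * poch t (n+1) * ∫ x in Set.Ioo (0:ℝ) 1, x ^ n * (1-x) ^ (t-1) := by
    exact_mod_cast hG
  have hΓpos := Real.Gamma_pos_of_pos ht
  have hp := poch_pos ht (n+1)
  field_simp
  nlinarith [hG']

noncomputable def Sl (l : ℕ) (x : ℝ) : ℝ := ∑ m ∈ Finset.range l, x^(m+1)/(m+1)
noncomputable def Ll (l : ℕ) (x : ℝ) : ℝ := -Real.log (1-x) - Sl l x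

lemma Sl_continuous (l : ℕ) : Continuous (Sl l) := by
  unfold Sl; fun_prop

lemma hasDerivAt_Ll (l : ℕ) {x : ℝ} (hx : x ∈ Set.Ioo (0:ℝ) 1) :
    HasDerivAt (Ll l) (x^l / (1-x)) x := by
  have hx1 : (0:ℝ) < 1 - x := by linarith [hx.2]
  have hlog : HasDerivAt (fun y : ℝ => Real.log (1-y)) ((1-x)⁻¹ * (-1)) x := by
    exact (Real.hasDerivAt_log (ne_of_gt hx1)).comp x ((hasDerivAt_id x).const_sub 1)
  have hS : HasDerivAt (Sl l) (∑ m ∈ Finset.range l, x^m) x := by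
    have : HasDerivAt (Sl l)
        (∑ m ∈ Finset.range l, ((m+1 : ℕ) * x^m) / (m+1)) x := by
      have h := HasDerivAt.sum (u := Finset.range l)
        (fun m _ => (hasDerivAt_pow (m+1) x).div_const ((m:ℝ)+1))
      have e1 : (∑ i ∈ Finset.range l, fun y : ℝ => y ^ (i + 1) / ((i:ℝ) + 1)) = Sl l := by
        funext y; simp [Sl, Finset.sum_apply]
      rw [e1] at h
      exact h.congr_deriv (Finset.sum_congr rfl fun m _ => by simp)
    convert this using 1
    refine Finset.sum_congr rfl (fun m _ => ?_)
    have : ((m:ℝ)+1) ≠ 0 := by positivity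
    field_simp
    norm_num
  have := (hlog.neg).sub hS
  refine this.congr_deriv ?_
  have hgeom : (∑ m ∈ Finset.range l, x^m) * (x - 1) = x^l - 1 := geom_sum_mul x l
  have hinv : (1-x) * (1-x)⁻¹ = 1 := mul_inv_cancel₀ (ne_of_gt hx1)
  linear_combination (1-x)⁻¹ * hgeom + (∑ m ∈ Finset.range l, x^m) * hinv

lemma Ll_continuousOn (l : ℕ) : ContinuousOn (Ll l) (Set.Ico 0 1) := by
  unfold Ll
  refine ContinuousOn.sub (ContinuousOn.neg ?_) (Sl_continuous l).continuousOn
  exact ContinuousOn.log (by fun_prop) (fun x hx => by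
    have : x < 1 := hx.2
    intro h; linarith [sub_eq_zero.mp h])

lemma Ll_strictMono (l : ℕ) : StrictMonoOn (Ll l) (Set.Ico 0 1) := by
  refine strictMonoOn_of_deriv_pos (convex_Ico 0 1) (Ll_continuousOn l) (fun x hx => ?_)
  rw [interior_Ico] at hx
  rw [(hasDerivAt_Ll l hx).deriv]
  have h1 : (0:ℝ) < 1 - x := by linarith [hx.2]
  have h2 : (0:ℝ) < x := hx.1
  positivity

lemma Ll_zero (l : ℕ) : Ll l 0 = 0 := by
  simp [Ll, Sl]

lemma Ll_pos (l : ℕ) {x : ℝ} (hx : x ∈ Set.Ioo (0:ℝ) 1) : 0 < Ll l x := by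
  have := Ll_strictMono l (Set.left_mem_Ico.2 (by norm_num)) ⟨hx.1.le, hx.2⟩ hx.1
  rwa [Ll_zero] at this

lemma Ll_tendsto (l : ℕ) : Tendsto (Ll l) (nhdsWithin 1 (Set.Iio 1)) atTop := by
  have h1 : Tendsto (fun x : ℝ => 1 - x) (nhdsWithin 1 (Set.Iio 1))
      (nhdsWithin 0 (Set.Ioi 0)) := by
    rw [tendsto_nhdsWithin_iff]
    constructor
    · have : Tendsto (fun x : ℝ => 1 - x) (nhds 1) (nhds 0) := by
        have h := (by fun_prop : Continuous (fun x : ℝ => 1 - x)).tendsto 1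
        simpa using h
      exact this.mono_left nhdsWithin_le_nhds
    · filter_upwards [self_mem_nhdsWithin] with x hx
      simp only [Set.mem_Iio] at hx
      simp [Set.mem_Ioi]; linarith
  have h2 : Tendsto (fun x : ℝ => -Real.log (1-x)) (nhdsWithin 1 (Set.Iio 1)) atTop := by
    have h := (Real.tendsto_log_nhdsGT_zero).comp h1
    exact tendsto_neg_atTop_iff.mpr h
  have h3 : Tendsto (fun x : ℝ => -Sl l x) (nhdsWithin 1 (Set.Iio 1)) (nhds (-Sl l 1)) :=
    ((Sl_continuous l).neg.tendsto 1).mono_left nhdsWithin_le_nhds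
  have := h2.atTop_add h3
  exact this.congr (fun x => by simp [Ll]; ring)

lemma Ll_image (l : ℕ) : Ll l '' (Set.Ioo 0 1) = Set.Ioi 0 := by
  apply Set.Subset.antisymm
  · rintro y ⟨x, hx, rfl⟩
    exact Ll_pos l hx
  · intro y hy
    have hy0 : (0:ℝ) < y := hy
    obtain ⟨b, hb, hby⟩ : ∃ b, b ∈ Set.Ioo (0:ℝ) 1 ∧ y < Ll l b := by
      have hev : ∀ᶠ x in nhdsWithin 1 (Set.Iio (1:ℝ)), y < Ll l x :=
        (Ll_tendsto l).eventually_gt_atTop y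
      have hev2 : ∀ᶠ x in nhdsWithin 1 (Set.Iio (1:ℝ)), x ∈ Set.Ioo (0:ℝ) 1 := by
        have : Set.Ioo (0:ℝ) 1 ∈ nhdsWithin 1 (Set.Iio (1:ℝ)) := by
          rw [mem_nhdsWithin]
          exact ⟨Set.Ioi 0, isOpen_Ioi, by norm_num, fun z hz => ⟨hz.1, hz.2⟩⟩
        exact this
      obtain ⟨b, hb1, hb2⟩ := (hev.and hev2).exists
      exact ⟨b, hb2, hb1⟩
    have hc : ContinuousOn (Ll l) (Set.Icc 0 b) :=
      (Ll_continuousOn l).mono (fun z hz => ⟨hz.1, lt_of_le_of_lt hz.2 hb.2⟩)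
    have hIoo : Set.Ioo (Ll l 0) (Ll l b) ⊆ Ll l '' (Set.Ioo 0 b) :=
      intermediate_value_Ioo (le_of_lt hb.1) hc
    have : y ∈ Set.Ioo (Ll l 0) (Ll l b) := by
      rw [Ll_zero]; exact ⟨hy0, hby⟩
    obtain ⟨x, hx, hxy⟩ := hIoo this
    exact ⟨x, ⟨hx.1, lt_trans hx.2 hb.2⟩, hxy⟩

lemma tsum_pi_prod : ∀ (n : ℕ) (f : Fin n → ℕ → ENNReal),
    ∑' r : Fin n → ℕ, ∏ j, f j (r j) = ∏ j, ∑' m, f j m := by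
  intro n
  induction n with
  | zero =>
    intro f
    simp only [Finset.univ_eq_empty, Finset.prod_empty]
    exact tsum_eq_single default (fun b hb => absurd (Subsingleton.elim b default) hb)
  | succ n ih =>
    intro f
    rw [← Equiv.tsum_eq (Fin.consEquiv fun _ : Fin (n+1) => ℕ) (fun r => ∏ j, f j (r j))]
    have hterm : ∀ p : ℕ × (Fin n → ℕ),
        (∏ j, f j (((Fin.consEquiv fun _ : Fin (n+1) => ℕ) p) j))
          = f 0 p.1 * ∏ j : Fin n, f j.succ (p.2 j) := by
      intro p
      rw [Fin.prod_univ_succ]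
      simp [Fin.consEquiv]
    calc ∑' p : ℕ × (Fin n → ℕ), ∏ j, f j (((Fin.consEquiv fun _ : Fin (n+1) => ℕ) p) j)
        = ∑' p : ℕ × (Fin n → ℕ), f 0 p.1 * ∏ j : Fin n, f j.succ (p.2 j) := by
          exact tsum_congr hterm
      _ = ∑' m : ℕ, ∑' r : Fin n → ℕ, f 0 m * ∏ j : Fin n, f j.succ (r j) :=
          ENNReal.tsum_prod' (f := fun p : ℕ × (Fin n → ℕ) => f 0 p.1 * ∏ j : Fin n, f j.succ (p.2 j))
      _ = (∑' m : ℕ, f 0 m) * ∑' r : Fin n → ℕ, ∏ j : Fin n, f j.succ (r j) := by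
          simp_rw [ENNReal.tsum_mul_left]
          rw [ENNReal.tsum_mul_right]
      _ = ∏ j, ∑' m, f j m := by
          rw [ih (fun j => f j.succ), Fin.prod_univ_succ]

lemma hasSum_shift {x : ℝ} (hx0 : 0 < x) (hx1 : x < 1) (l : ℕ) :
    HasSum (fun s : ℕ => x ^ s / ((s : ℝ) + l + 1)) (Ll l x / x ^ (l+1)) := by
  have habs : |x| < 1 := by rw [abs_of_pos hx0]; exact hx1
  have h0 := hasSum_pow_div_log_of_abs_lt_one habs
  have h1 : HasSum (fun n : ℕ => x ^ (n + l + 1) / (((n + l : ℕ) : ℝ) + 1)) (Ll l x) := by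
    refine (hasSum_nat_add_iff (f := fun n : ℕ => x ^ (n+1) / ((n:ℝ)+1)) l).mpr ?_
    have hval : Ll l x + ∑ i ∈ Finset.range l, x ^ (i+1) / ((i:ℝ)+1) = -Real.log (1-x) := by
      simp only [Ll, Sl]; ring
    rw [hval]
    exact h0
  have h2 := h1.div_const (x ^ (l+1))
  have hxne : x ≠ 0 := ne_of_gt hx0
  have hfe : (fun s : ℕ => x ^ s / ((s : ℝ) + l + 1))
      = fun s : ℕ => x ^ (s + l + 1) / (((s + l : ℕ) : ℝ) + 1) / x ^ (l+1) := by
    funext s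
    have hd : ((s:ℝ) + l + 1) ≠ 0 := by positivity
    push_cast
    rw [show s + l + 1 = s + (l + 1) by ring, pow_add]
    field_simp
  rw [hfe]
  exact h2

lemma hasSum_exp_ser (y : ℝ) :
    HasSum (fun r : ℕ => y ^ r / (Nat.factorial r : ℝ)) (Real.exp y) := by
  have hs := Real.summable_pow_div_factorial y
  have h := hs.hasSum
  have : ∑' n : ℕ, y ^ n / (Nat.factorial n : ℝ) = Real.exp y := by
    rw [Real.exp_eq_exp_ℝ, NormedSpace.exp_eq_tsum_div]
  rwa [this] at h

lemma phi_integrable {t : ℝ} (ht : 0 < t) (k : ℕ) :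
    IntegrableOn (fun u : ℝ => t ^ (k+1) * (u ^ k * Real.exp (-(t*u)))) (Set.Ioi 0) := by
  have h := integrableOn_rpow_mul_exp_neg_mul_rpow (p := 1) (s := (k:ℝ)) (b := t)
    (lt_of_lt_of_le neg_one_lt_zero (Nat.cast_nonneg k)) one_pos ht
  have h2 : IntegrableOn (fun u : ℝ => u ^ k * Real.exp (-(t*u))) (Set.Ioi 0) := by
    refine h.congr_fun (fun u hu => ?_) measurableSet_Ioi
    dsimp only
    rw [Real.rpow_one, Real.rpow_natCast, neg_mul]
  exact h2.const_mul _

lemma gamma_int {t : ℝ} (ht : 0 < t) (k : ℕ) :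
    ∫ u in Set.Ioi (0:ℝ), t ^ (k+1) * (u ^ k * Real.exp (-(t*u)))
      = (Nat.factorial k : ℝ) := by
  rw [MeasureTheory.integral_const_mul]
  have h := Real.integral_rpow_mul_exp_neg_mul_Ioi (a := (k:ℝ)+1) (r := t)
    (by positivity) ht
  have hcongr : ∀ u ∈ Set.Ioi (0:ℝ),
      u ^ ((k:ℝ)+1-1) * Real.exp (-(t*u)) = u ^ k * Real.exp (-(t*u)) := by
    intro u hu
    rw [show ((k:ℝ)+1-1) = (k:ℝ) by ring, Real.rpow_natCast]
  rw [setIntegral_congr_fun measurableSet_Ioi hcongr] at h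
  rw [h]
  have h1 : ((1:ℝ)/t) ^ ((k:ℝ)+1) = (1/t) ^ (k+1) := by
    rw [show ((k:ℝ)+1) = ((k+1 : ℕ) : ℝ) by push_cast; ring, Real.rpow_natCast]
  have h2 : Real.Gamma ((k:ℝ)+1) = (Nat.factorial k : ℝ) := Real.Gamma_nat_eq_factorial k
  rw [h1, h2]
  have htne : t ≠ 0 := ne_of_gt ht
  field_simp
  rw [← mul_pow, mul_one_div_cancel htne, one_pow]

lemma tsum_of_ofReal_tsum {ι : Type*} (f : ι → ℝ) (c : ℝ) (hf : ∀ i, 0 ≤ f i) (hc : 0 ≤ c)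
    (h : ∑' i, ENNReal.ofReal (f i) = ENNReal.ofReal c) : ∑' i, f i = c := by
  set g : ι → NNReal := fun i => ⟨f i, hf i⟩ with hg
  have h1 : ∀ i, ENNReal.ofReal (f i) = (g i : ENNReal) := by
    intro i
    rw [ENNReal.ofReal]
    congr 1
    exact Real.toNNReal_of_nonneg (hf i)
  rw [tsum_congr h1] at h
  have hne : (∑' i, (g i : ENNReal)) ≠ ⊤ := by rw [h]; exact ENNReal.ofReal_ne_top
  have hsum : Summable g := ENNReal.tsum_coe_ne_top_iff_summable.mp hne
  have h3 : ((∑' i, g i : NNReal) : ENNReal) = ENNReal.ofReal c := by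
    rw [ENNReal.coe_tsum hsum]; exact h
  have h4 : (∑' i, g i : NNReal) = Real.toNNReal c := by
    rw [ENNReal.ofReal] at h3; exact_mod_cast h3
  have h5 : ∑' i, f i = ((∑' i, g i : NNReal) : ℝ) := by
    rw [NNReal.coe_tsum]
    rfl
  rw [h5, h4]
  exact Real.coe_toNNReal c hc

lemma pointwise_sum (t : ℝ) (ht : 0 < t) (k l : ℕ) {x : ℝ} (hx : x ∈ Set.Ioo (0:ℝ) 1) :
    ∑' rs : (Fin l → ℕ) × (Fin k → ℕ),
      ENNReal.ofReal ((t ^ (k + (∑ j, rs.1 j) + 1) /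
          ((∏ i, ((rs.2 i : ℝ) + l + 1)) *
           ∏ j, ((j.1 + 1 : ℕ) : ℝ) ^ (rs.1 j) * (Nat.factorial (rs.1 j) : ℝ))) *
        (x ^ ((∑ i, rs.2 i) + (∑ j, (j.1 + 1) * rs.1 j) + k * l + k + l) * (1-x) ^ (t-1)))
      = ENNReal.ofReal (t ^ (k+1) * x ^ l * (1-x) ^ (t-1) * (Ll l x) ^ k
          * Real.exp (t * Sl l x)) := by
  obtain ⟨hx0, hx1⟩ := hx
  have hxn : (0:ℝ) ≤ x := hx0.le
  have hxne : x ≠ 0 := ne_of_gt hx0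
  have hx1' : (0:ℝ) < 1 - x := by linarith
  set D : ℝ := t ^ (k+1) * x ^ (k*l+k+l) * (1-x) ^ (t-1) with hD
  set a : ℕ → ℝ := fun s => x ^ s / ((s:ℝ) + l + 1) with ha
  set b : ℕ → ℕ → ℝ :=
    fun j r => (t * x ^ (j+1) / ((j+1:ℕ):ℝ)) ^ r / (Nat.factorial r : ℝ) with hb
  have ha_nn : ∀ s, 0 ≤ a s := fun s =>
    div_nonneg (pow_nonneg hxn s) (by positivity)
  have hb_nn : ∀ j r, 0 ≤ b j r := fun j r =>
    div_nonneg (pow_nonneg (div_nonneg (mul_nonneg ht.le (pow_nonneg hxn _))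
      (by positivity)) r) (Nat.cast_nonneg _)
  have hD_nn : 0 ≤ D := mul_nonneg (mul_nonneg (pow_nonneg ht.le _) (pow_nonneg hxn _))
    (Real.rpow_nonneg hx1'.le _)
  have hterm : ∀ rs : (Fin l → ℕ) × (Fin k → ℕ),
      (t ^ (k + (∑ j, rs.1 j) + 1) /
          ((∏ i, ((rs.2 i : ℝ) + l + 1)) *
           ∏ j, ((j.1 + 1 : ℕ) : ℝ) ^ (rs.1 j) * (Nat.factorial (rs.1 j) : ℝ))) *
        (x ^ ((∑ i, rs.2 i) + (∑ j, (j.1 + 1) * rs.1 j) + k * l + k + l) * (1-x) ^ (t-1))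
      = (D * ∏ j : Fin l, b j.1 (rs.1 j)) * ∏ i : Fin k, a (rs.2 i) := by
    intro rs
    have hP1 : (0:ℝ) < ∏ i, ((rs.2 i : ℝ) + l + 1) :=
      Finset.prod_pos fun i _ => by positivity
    have hP2 : (0:ℝ) < ∏ j : Fin l,
        ((j.1 + 1 : ℕ) : ℝ) ^ (rs.1 j) * (Nat.factorial (rs.1 j) : ℝ) :=
      Finset.prod_pos fun j _ => mul_pos
        (pow_pos (by exact_mod_cast Nat.succ_pos j.1) _)
        (by exact_mod_cast Nat.factorial_pos _)
    have hprodA : ∏ i : Fin k, a (rs.2 i)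
        = x ^ (∑ i, rs.2 i) / ∏ i, ((rs.2 i : ℝ) + l + 1) := by
      rw [ha]
      rw [Finset.prod_div_distrib, Finset.prod_pow_eq_pow_sum]
    have hprodB : ∏ j : Fin l, b j.1 (rs.1 j)
        = t ^ (∑ j, rs.1 j) * x ^ (∑ j, (j.1 + 1) * rs.1 j) /
          ∏ j : Fin l, ((j.1 + 1 : ℕ) : ℝ) ^ (rs.1 j) * (Nat.factorial (rs.1 j) : ℝ) := by
      have hfact : ∀ j : Fin l, b j.1 (rs.1 j)
          = (t ^ (rs.1 j) * x ^ ((j.1+1) * rs.1 j)) /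
            (((j.1 + 1 : ℕ) : ℝ) ^ (rs.1 j) * (Nat.factorial (rs.1 j) : ℝ)) := by
        intro j
        simp only [hb]
        rw [div_pow, mul_pow, ← pow_mul, div_div]
      rw [Finset.prod_congr rfl (fun j _ => hfact j), Finset.prod_div_distrib,
        Finset.prod_mul_distrib, Finset.prod_pow_eq_pow_sum, Finset.prod_pow_eq_pow_sum]
    rw [hprodA, hprodB, hD]
    field_simp
    ring
  calc ∑' rs : (Fin l → ℕ) × (Fin k → ℕ),
      ENNReal.ofReal ((t ^ (k + (∑ j, rs.1 j) + 1) /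
          ((∏ i, ((rs.2 i : ℝ) + l + 1)) *
           ∏ j, ((j.1 + 1 : ℕ) : ℝ) ^ (rs.1 j) * (Nat.factorial (rs.1 j) : ℝ))) *
        (x ^ ((∑ i, rs.2 i) + (∑ j, (j.1 + 1) * rs.1 j) + k * l + k + l) * (1-x) ^ (t-1)))
      = ∑' rs : (Fin l → ℕ) × (Fin k → ℕ),
          (ENNReal.ofReal D * ∏ j : Fin l, ENNReal.ofReal (b j.1 (rs.1 j))) *
            ∏ i : Fin k, ENNReal.ofReal (a (rs.2 i)) := by
        refine tsum_congr fun rs => ?_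
        rw [hterm rs,
          ENNReal.ofReal_mul (mul_nonneg hD_nn (Finset.prod_nonneg fun j _ => hb_nn _ _)),
          ENNReal.ofReal_mul hD_nn,
          ENNReal.ofReal_prod_of_nonneg (fun j _ => hb_nn _ _),
          ENNReal.ofReal_prod_of_nonneg (fun i _ => ha_nn _)]
    _ = (ENNReal.ofReal D *
          ∑' r : Fin l → ℕ, ∏ j : Fin l, ENNReal.ofReal (b j.1 (r j))) *
        ∑' s : Fin k → ℕ, ∏ i : Fin k, ENNReal.ofReal (a (s i)) := by
        rw [ENNReal.tsum_prod' (f := fun rs : (Fin l → ℕ) × (Fin k → ℕ) =>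
          (ENNReal.ofReal D * ∏ j : Fin l, ENNReal.ofReal (b j.1 (rs.1 j))) *
            ∏ i : Fin k, ENNReal.ofReal (a (rs.2 i)))]
        simp_rw [ENNReal.tsum_mul_left]
        rw [ENNReal.tsum_mul_right, ENNReal.tsum_mul_left]
    _ = (ENNReal.ofReal D *
          ∏ j : Fin l, ∑' m : ℕ, ENNReal.ofReal (b j.1 m)) *
        (∑' m : ℕ, ENNReal.ofReal (a m)) ^ k := by
        rw [tsum_pi_prod l (fun j m => ENNReal.ofReal (b j.1 m)),
          tsum_pi_prod k (fun _ m => ENNReal.ofReal (a m)),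
          Finset.prod_const, Finset.card_univ, Fintype.card_fin]
    _ = ENNReal.ofReal (t ^ (k+1) * x ^ l * (1-x) ^ (t-1) * (Ll l x) ^ k
          * Real.exp (t * Sl l x)) := by
        have hSa : ∑' m : ℕ, ENNReal.ofReal (a m)
            = ENNReal.ofReal (Ll l x / x ^ (l+1)) := by
          rw [← ENNReal.ofReal_tsum_of_nonneg ha_nn (hasSum_shift hx0 hx1 l).summable]
          exact congrArg _ (hasSum_shift hx0 hx1 l).tsum_eq
        have hSb : ∀ j : ℕ, ∑' m : ℕ, ENNReal.ofReal (b j m)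
            = ENNReal.ofReal (Real.exp (t * x ^ (j+1) / ((j+1:ℕ):ℝ))) := by
          intro j
          have h := hasSum_exp_ser (t * x ^ (j+1) / ((j+1:ℕ):ℝ))
          rw [← ENNReal.ofReal_tsum_of_nonneg (hb_nn j) h.summable]
          exact congrArg _ h.tsum_eq
        simp_rw [hSb]
        rw [hSa]
        have hprodExp : ∏ j : Fin l,
            ENNReal.ofReal (Real.exp (t * x ^ (j.1+1) / ((j.1+1:ℕ):ℝ)))
            = ENNReal.ofReal (Real.exp (t * Sl l x)) := by
          rw [← ENNReal.ofReal_prod_of_nonneg (fun j _ => (Real.exp_pos _).le)]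
          congr 1
          rw [← Real.exp_sum]
          congr 1
          rw [Fin.sum_univ_eq_sum_range (fun m => t * x ^ (m+1) / ((m+1:ℕ):ℝ)) l,
            Sl, Finset.mul_sum]
          refine Finset.sum_congr rfl fun m _ => ?_
          push_cast
          ring
        rw [hprodExp]
        have hLdiv_nn : 0 ≤ Ll l x / x ^ (l+1) :=
          div_nonneg (Ll_pos l ⟨hx0, hx1⟩).le (pow_nonneg hxn _)
        rw [← ENNReal.ofReal_pow hLdiv_nn, ← ENNReal.ofReal_mul hD_nn,
          ← ENNReal.ofReal_mul (mul_nonneg hD_nn (Real.exp_pos _).le)]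
        congr 1
        rw [hD, div_pow, ← pow_mul]
        have hxsplit : x ^ (k*l+k+l) = x ^ ((l+1)*k) * x ^ l := by
          rw [← pow_add]
          congr 1
          ring
        rw [hxsplit]
        field_simp

lemma F_lintegral (t : ℝ) (ht : 0 < t) (k l : ℕ) :
    ∫⁻ x in Set.Ioo (0:ℝ) 1,
      ENNReal.ofReal (t ^ (k+1) * x ^ l * (1-x) ^ (t-1) * (Ll l x) ^ k
        * Real.exp (t * Sl l x))
      = ENNReal.ofReal (Nat.factorial k : ℝ) := by
  set φ : ℝ → ℝ := fun u => t ^ (k+1) * (u ^ k * Real.exp (-(t*u))) with hφ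
  have hderiv : ∀ x ∈ Set.Ioo (0:ℝ) 1,
      HasDerivWithinAt (Ll l) (x ^ l / (1-x)) (Set.Ioo 0 1) x :=
    fun x hx => (hasDerivAt_Ll l hx).hasDerivWithinAt
  have hinj : Set.InjOn (Ll l) (Set.Ioo 0 1) :=
    ((Ll_strictMono l).injOn).mono Set.Ioo_subset_Ico_self
  have hpt : ∀ x ∈ Set.Ioo (0:ℝ) 1,
      t ^ (k+1) * x ^ l * (1-x) ^ (t-1) * (Ll l x) ^ k * Real.exp (t * Sl l x)
        = |x ^ l / (1-x)| • φ (Ll l x) := by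
    intro x hx
    obtain ⟨hx0, hx1⟩ := hx
    have hx1' : (0:ℝ) < 1 - x := by linarith
    have habs : |x ^ l / (1-x)| = x ^ l / (1-x) := by
      rw [abs_of_nonneg (div_nonneg (pow_nonneg hx0.le l) hx1'.le)]
    rw [habs, smul_eq_mul, hφ]
    have hexp : Real.exp (t * Sl l x)
        = Real.exp (-(t * Ll l x)) * (1-x) ^ (-t) := by
      have hS : t * Sl l x = -(t * Ll l x) + (-t) * Real.log (1-x) := by
        simp only [Ll]; ring
      rw [hS, Real.exp_add]
      congr 1
      rw [Real.rpow_def_of_pos hx1']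
      ring_nf
    rw [hexp]
    have hrw : (1-x) ^ (t-1) * (1-x) ^ (-t) = (1-x)⁻¹ := by
      rw [← Real.rpow_add hx1', show t - 1 + -t = (-1:ℝ) by ring, Real.rpow_neg_one]
    rw [div_eq_mul_inv, ← hrw]
    ring
  have hφ_int : IntegrableOn φ (Ll l '' Set.Ioo 0 1) := by
    rw [Ll_image l]
    exact phi_integrable ht k
  have hint : IntegrableOn (fun x => |x ^ l / (1-x)| • φ (Ll l x)) (Set.Ioo 0 1) :=
    (integrableOn_image_iff_integrableOn_abs_deriv_smul measurableSet_Ioo hderiv hinj φ).mp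
      hφ_int
  calc ∫⁻ x in Set.Ioo (0:ℝ) 1,
      ENNReal.ofReal (t ^ (k+1) * x ^ l * (1-x) ^ (t-1) * (Ll l x) ^ k
        * Real.exp (t * Sl l x))
      = ∫⁻ x in Set.Ioo (0:ℝ) 1, ENNReal.ofReal (|x ^ l / (1-x)| • φ (Ll l x)) := by
        refine setLIntegral_congr_fun measurableSet_Ioo ?_
        intro x hx
        dsimp only
        rw [hpt x hx]
    _ = ENNReal.ofReal (∫ x in Set.Ioo (0:ℝ) 1, |x ^ l / (1-x)| • φ (Ll l x)) := by
        refine (MeasureTheory.ofReal_integral_eq_lintegral_ofReal hint ?_).symm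
        rw [Filter.EventuallyLE, ae_restrict_iff' measurableSet_Ioo]
        refine Filter.Eventually.of_forall (fun x hx => ?_)
        have h1 := Ll_pos l hx
        have : 0 ≤ φ (Ll l x) := by
          rw [hφ]
          positivity
        simp only [Pi.zero_apply, smul_eq_mul]
        exact mul_nonneg (abs_nonneg _) this
    _ = ENNReal.ofReal (∫ u in Ll l '' Set.Ioo (0:ℝ) 1, φ u) := by
        rw [integral_image_eq_integral_abs_deriv_smul measurableSet_Ioo hderiv hinj φ]
    _ = ENNReal.ofReal (Nat.factorial k : ℝ) := by
        rw [Ll_image l, gamma_int ht k]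

lemma key_sum (t : ℝ) (ht : 0 < t) (k l : ℕ) :
    ∑' rs : (Fin l → ℕ) × (Fin k → ℕ),
        ((Nat.factorial ((∑ i, rs.2 i) + (∑ j, (j.1 + 1) * rs.1 j) + k * l + k + l) : ℝ) *
            t ^ (k + (∑ j, rs.1 j) + 1)) /
          ((∏ i, ((rs.2 i : ℝ) + l + 1)) *
            (∏ j, ((j.1 + 1 : ℕ) : ℝ) ^ (rs.1 j) * (Nat.factorial (rs.1 j) : ℝ)) *
            poch t ((∑ i, rs.2 i) + (∑ j, (j.1 + 1) * rs.1 j) + k * l + k + l + 1))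
      = (Nat.factorial k : ℝ) := by
  set N : (Fin l → ℕ) × (Fin k → ℕ) → ℕ :=
    fun rs => (∑ i, rs.2 i) + (∑ j, (j.1 + 1) * rs.1 j) + k * l + k + l with hN
  set c : (Fin l → ℕ) × (Fin k → ℕ) → ℝ := fun rs =>
    t ^ (k + (∑ j, rs.1 j) + 1) /
      ((∏ i, ((rs.2 i : ℝ) + l + 1)) *
        ∏ j, ((j.1 + 1 : ℕ) : ℝ) ^ (rs.1 j) * (Nat.factorial (rs.1 j) : ℝ)) with hc
  have hc_nn : ∀ rs, 0 ≤ c rs := by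
    intro rs
    rw [hc]
    have hP1 : (0:ℝ) < ∏ i, ((rs.2 i : ℝ) + l + 1) :=
      Finset.prod_pos fun i _ => by positivity
    have hP2 : (0:ℝ) < ∏ j : Fin l,
        ((j.1 + 1 : ℕ) : ℝ) ^ (rs.1 j) * (Nat.factorial (rs.1 j) : ℝ) :=
      Finset.prod_pos fun j _ => mul_pos
        (pow_pos (by exact_mod_cast Nat.succ_pos j.1) _)
        (by exact_mod_cast Nat.factorial_pos _)
    exact div_nonneg (pow_nonneg ht.le _) (mul_pos hP1 hP2).le
  have hA_nn : ∀ rs : (Fin l → ℕ) × (Fin k → ℕ),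
      0 ≤ ((Nat.factorial (N rs) : ℝ) * t ^ (k + (∑ j, rs.1 j) + 1)) /
          ((∏ i, ((rs.2 i : ℝ) + l + 1)) *
            (∏ j, ((j.1 + 1 : ℕ) : ℝ) ^ (rs.1 j) * (Nat.factorial (rs.1 j) : ℝ)) *
            poch t (N rs + 1)) := by
    intro rs
    have hP1 : (0:ℝ) < ∏ i, ((rs.2 i : ℝ) + l + 1) :=
      Finset.prod_pos fun i _ => by positivity
    have hP2 : (0:ℝ) < ∏ j : Fin l,
        ((j.1 + 1 : ℕ) : ℝ) ^ (rs.1 j) * (Nat.factorial (rs.1 j) : ℝ) :=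
      Finset.prod_pos fun j _ => mul_pos
        (pow_pos (by exact_mod_cast Nat.succ_pos j.1) _)
        (by exact_mod_cast Nat.factorial_pos _)
    have hpoch := poch_pos ht (N rs + 1)
    have hnum : (0:ℝ) ≤ (Nat.factorial (N rs) : ℝ) * t ^ (k + (∑ j, rs.1 j) + 1) :=
      mul_nonneg (Nat.cast_nonneg _) (pow_nonneg ht.le _)
    exact div_nonneg hnum (mul_pos (mul_pos hP1 hP2) hpoch).le
  have hofReal : ∀ rs : (Fin l → ℕ) × (Fin k → ℕ),
      ENNReal.ofReal (((Nat.factorial (N rs) : ℝ) * t ^ (k + (∑ j, rs.1 j) + 1)) /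
          ((∏ i, ((rs.2 i : ℝ) + l + 1)) *
            (∏ j, ((j.1 + 1 : ℕ) : ℝ) ^ (rs.1 j) * (Nat.factorial (rs.1 j) : ℝ)) *
            poch t (N rs + 1)))
        = ∫⁻ x in Set.Ioo (0:ℝ) 1,
            ENNReal.ofReal (c rs * (x ^ (N rs) * (1-x) ^ (t-1))) := by
    intro rs
    have h1 : ((Nat.factorial (N rs) : ℝ) * t ^ (k + (∑ j, rs.1 j) + 1)) /
          ((∏ i, ((rs.2 i : ℝ) + l + 1)) *
            (∏ j, ((j.1 + 1 : ℕ) : ℝ) ^ (rs.1 j) * (Nat.factorial (rs.1 j) : ℝ)) *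
            poch t (N rs + 1))
        = ∫ x in Set.Ioo (0:ℝ) 1, c rs * (x ^ (N rs) * (1-x) ^ (t-1)) := by
      rw [MeasureTheory.integral_const_mul, beta_eq ht (N rs), hc]
      rw [div_mul_div_comm]
      ring
    rw [h1]
    refine MeasureTheory.ofReal_integral_eq_lintegral_ofReal
      ((beta_integrable ht (N rs)).const_mul (c rs)) ?_
    rw [Filter.EventuallyLE, ae_restrict_iff' measurableSet_Ioo]
    refine Filter.Eventually.of_forall (fun x hx => ?_)
    have hxn : (0:ℝ) ≤ x := hx.1.le
    have hx1 : (0:ℝ) ≤ 1 - x := by linarith [hx.2]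
    simp only [Pi.zero_apply]
    exact mul_nonneg (hc_nn rs)
      (mul_nonneg (pow_nonneg hxn _) (Real.rpow_nonneg hx1 _))
  have hmeas : ∀ rs : (Fin l → ℕ) × (Fin k → ℕ),
      AEMeasurable (fun x : ℝ => ENNReal.ofReal (c rs * (x ^ (N rs) * (1-x) ^ (t-1))))
        (MeasureTheory.volume.restrict (Set.Ioo 0 1)) := by
    intro rs
    refine Measurable.aemeasurable (Measurable.ennreal_ofReal ?_)
    exact measurable_const.mul ((measurable_id.pow_const _).mul
      ((measurable_const.sub measurable_id).pow measurable_const))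
  have htsum : ∑' rs : (Fin l → ℕ) × (Fin k → ℕ),
      ENNReal.ofReal (((Nat.factorial (N rs) : ℝ) * t ^ (k + (∑ j, rs.1 j) + 1)) /
          ((∏ i, ((rs.2 i : ℝ) + l + 1)) *
            (∏ j, ((j.1 + 1 : ℕ) : ℝ) ^ (rs.1 j) * (Nat.factorial (rs.1 j) : ℝ)) *
            poch t (N rs + 1)))
      = ENNReal.ofReal (Nat.factorial k : ℝ) := by
    rw [tsum_congr hofReal, ← MeasureTheory.lintegral_tsum hmeas]
    rw [setLIntegral_congr_fun measurableSet_Ioo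
      (fun x hx => pointwise_sum t ht k l hx)]
    exact F_lintegral t ht k l
  exact tsum_of_ofReal_tsum _ _ hA_nn (Nat.cast_nonneg _) htsum

theorem stmt16 (t : ℝ) (ht : 0 < t) (k l : ℕ) (hl : 1 ≤ l) :
    (1 / (Nat.factorial k : ℝ)) *
      ∑' rs : (Fin l → ℕ) × (Fin k → ℕ),
        ((Nat.factorial ((∑ i, rs.2 i) + (∑ j, (j.1 + 1) * rs.1 j) + k * l + k + l) : ℝ) *
            t ^ (k + (∑ j, rs.1 j) + 1)) /
          ((∏ i, ((rs.2 i : ℝ) + l + 1)) *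
            (∏ j, ((j.1 + 1 : ℕ) : ℝ) ^ (rs.1 j) * (Nat.factorial (rs.1 j) : ℝ)) *
            poch t ((∑ i, rs.2 i) + (∑ j, (j.1 + 1) * rs.1 j) + k * l + k + l + 1))
    = 1 := by
  rw [key_sum t ht k l]
  have h : (Nat.factorial k : ℝ) ≠ 0 := Nat.cast_ne_zero.mpr (Nat.factorial_ne_zero k)
  field_simp
end
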